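/- Let H = Σ_{n=1}^{N} (σ^x_n σ^x_{n+1} + σ^y_n σ^y_{n+1}) be the periodic XX Hamiltonian on N qubits (N even, σ_{N+1} = σ_1), and V = Σ_{k=1}^{N/2} (σ^x_{2k-1} σ^y_{2k} − σ^y_{2k} σ^x_{2k+1}). Then [V, H] = 0. -/

import Mathlib

/-!
Write `V = ∑ₖ v_{2k}` with `v_t = X_t Y_{t+1} - Y_{t+1} X_{t+2}`. By the Leibniz rule, the bracket
of a Pauli product with a bond of `H` reduces to one-site brackets; those at distinct sites
vanish, and at a common site only `⁅X, Y⁆ = 2i Z` survives. Hence `X_t Y_{t+1}` only sees the three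
bonds touching it, and summing them gives
`⁅v_t, H⁆ = 2i (D_t - D_{t+2})` with `D_t = Y_{t-1} Z_t Y_{t+1} + Z_t`,
the `X_t Z_{t+1} X_{t+2}` and `Z_{t+1}` terms cancelling between the two halves of `v_t`.
Summing over even `t` the bracket `⁅V, H⁆` telescopes around the ring to `D_0 - D_N = 0`.
For `N = 2` the two halves of `V` are equal, so `V = 0`.
-/

noncomputable section
open Matrix Complex BigOperators Finset

/-- Pauli x matrix. -/
def pX : Matrix (Fin 2) (Fin 2) ℂ := !![0, 1; 1, 0]
/-- Pauli y matrix. -/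
def pY : Matrix (Fin 2) (Fin 2) ℂ := !![0, -Complex.I; Complex.I, 0]
/-- Pauli z matrix. -/
def pZ : Matrix (Fin 2) (Fin 2) ℂ := !![1, 0; 0, -1]

/-- The operator acting as `A` on the `n`-th qubit (0-based) and as identity elsewhere,
on the `N`-qubit space `(ℂ²)^⊗N`, realized as matrices indexed by `Fin N → Fin 2`. -/
def site (N : ℕ) (A : Matrix (Fin 2) (Fin 2) ℂ) (n : Fin N) :
    Matrix (Fin N → Fin 2) (Fin N → Fin 2) ℂ :=
  Matrix.of fun s t => ∏ j : Fin N, if j = n then A (s j) (t j) else if s j = t j then 1 else 0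

open Fin.NatCast in
/-- The chiral operator `V = Σ_{k=1}^{N/2} (σ^x_{2k-1} σ^y_{2k} − σ^y_{2k} σ^x_{2k+1})`
(1-based paper indices; here sites are 0-based, and indices are taken mod N via `Nat.cast`). -/
def Vop (N : ℕ) [NeZero N] : Matrix (Fin N → Fin 2) (Fin N → Fin 2) ℂ :=
  ∑ k ∈ Finset.range (N / 2),
    (site N pX (↑(2 * k)) * site N pY (↑(2 * k + 1))
      - site N pY (↑(2 * k + 1)) * site N pX (↑(2 * k + 2)))

/-- The periodic XX Hamiltonian `H = Σ_{n=1}^{N} (σ^x_n σ^x_{n+1} + σ^y_n σ^y_{n+1})`,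
with cyclic boundary conditions. -/
def Hxx (N : ℕ) [NeZero N] : Matrix (Fin N → Fin 2) (Fin N → Fin 2) ℂ :=
  ∑ n : Fin N, (site N pX n * site N pX (n + 1) + site N pY n * site N pY (n + 1))

open Fin.CommRing Fin.NatCast

attribute [local instance] LieRing.ofAssociativeRing LieAlgebra.ofAssociativeAlgebra

theorem Ring.lie_mul {A : Type*} [Ring A] (a b c : A) :
    ⁅a, b * c⁆ = ⁅a, b⁆ * c + b * ⁅a, c⁆ := by
  simp only [Ring.lie_def]; noncomm_ring

theorem Ring.mul_lie {A : Type*} [Ring A] (a b c : A) :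
    ⁅a * b, c⁆ = a * ⁅b, c⁆ + ⁅a, c⁆ * b := by
  simp only [Ring.lie_def]; noncomm_ring

theorem Fintype.sum_eq_add_add {ι M : Type*} [Fintype ι] [DecidableEq ι] [AddCommMonoid M]
    (f : ι → M) {a b c : ι} (hab : a ≠ b) (hac : a ≠ c) (hbc : b ≠ c)
    (h : ∀ x, x ≠ a → x ≠ b → x ≠ c → f x = 0) : ∑ x, f x = f a + f b + f c := by
  rw [← Finset.sum_subset (Finset.subset_univ {a, b, c}) fun x _ hx => by
    simp only [Finset.mem_insert, Finset.mem_singleton, not_or] at hx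
    exact h x hx.1 hx.2.1 hx.2.2]
  rw [Finset.sum_insert (by simp [hab, hac]), Finset.sum_pair hbc, add_assoc]

theorem Fin.ne_of_sub_eq_natCast {N : ℕ} [NeZero N] {u v : Fin N} {m : ℕ}
    (h : u - v = (m : Fin N)) (hm0 : 0 < m) (hmN : m < N) : u ≠ v := by
  rintro rfl
  rw [sub_self, eq_comm, Fin.natCast_eq_zero] at h
  exact Nat.not_dvd_of_pos_of_lt hm0 hmN h

theorem Fin.consecutive_ne {N : ℕ} [NeZero N] (hN : 3 ≤ N) (t : Fin N) :
    t - 1 ≠ t ∧ t - 1 ≠ t + 1 ∧ t ≠ t + 1 :=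
  ⟨(Fin.ne_of_sub_eq_natCast (m := 1) (by push_cast; ring) Nat.one_pos (by omega)).symm,
    (Fin.ne_of_sub_eq_natCast (m := 2) (by push_cast; ring) two_pos (by omega)).symm,
    (Fin.ne_of_sub_eq_natCast (m := 1) (by push_cast; ring) Nat.one_pos (by omega)).symm⟩

section TensorWord

variable {ι d R : Type*} [Fintype ι] [DecidableEq ι] [Fintype d] [DecidableEq d] [CommRing R]

def tensorWord : (ι → Matrix d d R) →* Matrix (ι → d) (ι → d) R where
  toFun f := of fun s t => ∏ j, f j (s j) (t j)
  map_one' := by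
    ext s t
    simp [one_apply, Finset.prod_boole, funext_iff]
  map_mul' f g := by
    ext s t
    simp only [of_apply, mul_apply, Pi.mul_apply, Fintype.prod_sum, Finset.prod_mul_distrib]

theorem tensorWord_mulSingle_smul (n : ι) (c : R) (A : Matrix d d R) :
    tensorWord (Pi.mulSingle n (c • A)) = c • tensorWord (Pi.mulSingle n A) := by
  ext s t
  simp only [tensorWord, MonoidHom.coe_mk, OneHom.coe_mk, of_apply, Matrix.smul_apply,
    smul_eq_mul, Fintype.prod_eq_mul_prod_compl n, Pi.mulSingle_eq_same]
  rw [mul_assoc]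
  congr 2
  refine Finset.prod_congr rfl fun j hj => ?_
  have hjn : j ≠ n := by simpa using hj
  simp only [Pi.mulSingle_eq_of_ne hjn]

end TensorWord

@[simp]
theorem pX_mul_self : pX * pX = 1 := by
  ext i j; fin_cases i <;> fin_cases j <;> simp [pX, mul_apply]

@[simp]
theorem pY_mul_self : pY * pY = 1 := by
  ext i j; fin_cases i <;> fin_cases j <;> simp [pY, mul_apply]

theorem pX_mul_pY : pX * pY = I • pZ := by
  ext i j; fin_cases i <;> fin_cases j <;> simp [pX, pY, pZ, mul_apply]

theorem pY_mul_pX : pY * pX = -I • pZ := by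
  ext i j; fin_cases i <;> fin_cases j <;> simp [pX, pY, pZ, mul_apply]

section Sites

variable {N : ℕ}

theorem site_eq_tensorWord (A : Matrix (Fin 2) (Fin 2) ℂ) (n : Fin N) :
    site N A n = tensorWord (Pi.mulSingle n A) := by
  ext s t
  simp only [site, tensorWord, MonoidHom.coe_mk, OneHom.coe_mk, of_apply, Pi.mulSingle_apply]
  refine Finset.prod_congr rfl fun j _ => ?_
  split_ifs <;> simp_all [one_apply]

@[simp]
theorem site_one (n : Fin N) : site N 1 n = 1 := by
  rw [site_eq_tensorWord, Pi.mulSingle_one, map_one]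

@[simp]
theorem site_mul_site (A B : Matrix (Fin 2) (Fin 2) ℂ) (n : Fin N) :
    site N A n * site N B n = site N (A * B) n := by
  simp only [site_eq_tensorWord, ← map_mul, Pi.mulSingle_mul]

@[simp]
theorem site_mul_site_mul (A B : Matrix (Fin 2) (Fin 2) ℂ) (n : Fin N)
    (M : Matrix (Fin N → Fin 2) (Fin N → Fin 2) ℂ) :
    site N A n * (site N B n * M) = site N (A * B) n * M := by
  rw [← mul_assoc, site_mul_site]

theorem site_smul (c : ℂ) (A : Matrix (Fin 2) (Fin 2) ℂ) (n : Fin N) :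
    site N (c • A) n = c • site N A n := by
  simp only [site_eq_tensorWord, tensorWord_mulSingle_smul]

theorem site_commute (A B : Matrix (Fin 2) (Fin 2) ℂ) {n m : Fin N} (h : n ≠ m) :
    Commute (site N A n) (site N B m) := by
  simp only [site_eq_tensorWord]
  exact (Pi.mulSingle_commute h A B).map tensorWord

@[simp]
theorem site_lie_site_of_ne (A B : Matrix (Fin 2) (Fin 2) ℂ) {n m : Fin N} (h : n ≠ m) :
    ⁅site N A n, site N B m⁆ = 0 :=
  (site_commute A B h).lie_eq

@[simp]
theorem site_pX_lie_site_pY (n : Fin N) :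
    ⁅site N pX n, site N pY n⁆ = (2 * I) • site N pZ n := by
  rw [Ring.lie_def, site_mul_site, site_mul_site, pX_mul_pY, pY_mul_pX, site_smul, site_smul]
  module

@[simp]
theorem site_pY_lie_site_pX (n : Fin N) :
    ⁅site N pY n, site N pX n⁆ = -(2 * I) • site N pZ n := by
  rw [← lie_skew, site_pX_lie_site_pY, neg_smul]

end Sites

section Bonds

variable {N : ℕ}

def bond (N : ℕ) (i j : Fin N) : Matrix (Fin N → Fin 2) (Fin N → Fin 2) ℂ :=
  site N pX i * site N pX j + site N pY i * site N pY j

theorem site_mul_site_lie_bond_eq_zero (A B : Matrix (Fin 2) (Fin 2) ℂ) {q r i j : Fin N}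
    (hiq : i ≠ q) (hir : i ≠ r) (hjq : j ≠ q) (hjr : j ≠ r) :
    ⁅site N A q * site N B r, bond N i j⁆ = 0 := by
  simp [bond, Ring.mul_lie, Ring.lie_mul, hiq.symm, hir.symm, hjq.symm, hjr.symm]

theorem xy_lie_bond_left {p q r : Fin N} (hpq : p ≠ q) (hpr : p ≠ r) (hqr : q ≠ r) :
    ⁅site N pX q * site N pY r, bond N p q⁆ =
      (2 * I) • (site N pY p * site N pZ q * site N pY r) := by
  simp [bond, Ring.mul_lie, Ring.lie_mul, hpq.symm, hpr.symm, hqr.symm, mul_assoc]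

theorem xy_lie_bond_mid {q r : Fin N} (hqr : q ≠ r) :
    ⁅site N pX q * site N pY r, bond N q r⁆ = (2 * I) • (site N pZ q - site N pZ r) := by
  simp [bond, Ring.mul_lie, Ring.lie_mul, hqr, hqr.symm, mul_assoc]
  module

theorem xy_lie_bond_right {q r s : Fin N} (hqr : q ≠ r) (hqs : q ≠ s) (hrs : r ≠ s) :
    ⁅site N pX q * site N pY r, bond N r s⁆ =
      -(2 * I) • (site N pX q * site N pZ r * site N pX s) := by
  simp [bond, Ring.mul_lie, Ring.lie_mul, hqr, hqs, hrs, mul_assoc]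

theorem yx_lie_bond_left {q r s : Fin N} (hqr : q ≠ r) (hqs : q ≠ s) (hrs : r ≠ s) :
    ⁅site N pY r * site N pX s, bond N q r⁆ =
      -(2 * I) • (site N pX q * site N pZ r * site N pX s) := by
  simp [bond, Ring.mul_lie, Ring.lie_mul, hqr.symm, hqs.symm, hrs.symm, mul_assoc]

theorem yx_lie_bond_mid {r s : Fin N} (hrs : r ≠ s) :
    ⁅site N pY r * site N pX s, bond N r s⁆ = (2 * I) • (site N pZ s - site N pZ r) := by
  simp [bond, Ring.mul_lie, Ring.lie_mul, hrs, hrs.symm, mul_assoc]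
  module

theorem yx_lie_bond_right {r s u : Fin N} (hrs : r ≠ s) (hru : r ≠ u) (hsu : s ≠ u) :
    ⁅site N pY r * site N pX s, bond N s u⁆ =
      (2 * I) • (site N pY r * site N pZ s * site N pY u) := by
  simp [bond, Ring.mul_lie, Ring.lie_mul, hrs, hru, hsu, mul_assoc]

end Bonds

section Chain

variable {N : ℕ} [NeZero N]

theorem Hxx_eq_sum_bond : Hxx N = ∑ n, bond N n (n + 1) := rfl

theorem site_mul_site_lie_Hxx (A B : Matrix (Fin 2) (Fin 2) ℂ) (hN : 3 ≤ N) (t : Fin N) :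
    ⁅site N A t * site N B (t + 1), Hxx N⁆ =
      ⁅site N A t * site N B (t + 1), bond N (t - 1) t⁆
        + ⁅site N A t * site N B (t + 1), bond N t (t + 1)⁆
        + ⁅site N A t * site N B (t + 1), bond N (t + 1) (t + 2)⁆ := by
  obtain ⟨h₁, h₂, h₃⟩ := Fin.consecutive_ne hN t
  rw [Hxx_eq_sum_bond, lie_sum, Fintype.sum_eq_add_add _ h₁ h₂ h₃ fun n hn₁ hn₂ hn₃ =>
      site_mul_site_lie_bond_eq_zero A B hn₂ hn₃ (fun h => hn₁ (eq_sub_of_add_eq h))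
        (fun h => hn₂ (add_right_cancel h)),
    sub_add_cancel, add_assoc t 1 1, one_add_one_eq_two]

theorem xy_lie_Hxx (hN : 3 ≤ N) (t : Fin N) :
    ⁅site N pX t * site N pY (t + 1), Hxx N⁆ =
      (2 * I) • (site N pY (t - 1) * site N pZ t * site N pY (t + 1) + site N pZ t
        - site N pZ (t + 1) - site N pX t * site N pZ (t + 1) * site N pX (t + 2)) := by
  obtain ⟨h₁, h₂, h₃⟩ := Fin.consecutive_ne hN t
  obtain ⟨-, h₅, h₆⟩ := Fin.consecutive_ne hN (t + 1)
  simp only [add_sub_cancel_right, add_assoc, one_add_one_eq_two] at h₅ h₆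
  rw [site_mul_site_lie_Hxx _ _ hN, xy_lie_bond_left h₁ h₂ h₃, xy_lie_bond_mid h₃,
    xy_lie_bond_right h₃ h₅ h₆]
  module

theorem yx_lie_Hxx (hN : 3 ≤ N) (t : Fin N) :
    ⁅site N pY t * site N pX (t + 1), Hxx N⁆ =
      (2 * I) • (site N pY t * site N pZ (t + 1) * site N pY (t + 2) + site N pZ (t + 1)
        - site N pZ t - site N pX (t - 1) * site N pZ t * site N pX (t + 1)) := by
  obtain ⟨h₁, h₂, h₃⟩ := Fin.consecutive_ne hN t
  obtain ⟨-, h₅, h₆⟩ := Fin.consecutive_ne hN (t + 1)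
  simp only [add_sub_cancel_right, add_assoc, one_add_one_eq_two] at h₅ h₆
  rw [site_mul_site_lie_Hxx _ _ hN, yx_lie_bond_left h₁ h₂ h₃, yx_lie_bond_mid h₃,
    yx_lie_bond_right h₃ h₅ h₆]
  module

def chiralTerm (N : ℕ) [NeZero N] (t : Fin N) : Matrix (Fin N → Fin 2) (Fin N → Fin 2) ℂ :=
  site N pX t * site N pY (t + 1) - site N pY (t + 1) * site N pX (t + 2)

def yzyPlusZ (N : ℕ) [NeZero N] (t : Fin N) : Matrix (Fin N → Fin 2) (Fin N → Fin 2) ℂ :=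
  site N pY (t - 1) * site N pZ t * site N pY (t + 1) + site N pZ t

theorem chiralTerm_lie_Hxx (hN : 3 ≤ N) (t : Fin N) :
    ⁅chiralTerm N t, Hxx N⁆ = (2 * I) • (yzyPlusZ N t - yzyPlusZ N (t + 2)) := by
  rw [chiralTerm, sub_lie, xy_lie_Hxx hN, show t + 2 = t + 1 + 1 by ring, yx_lie_Hxx hN,
    show t + 1 + 2 = t + 1 + 1 + 1 by ring]
  simp only [yzyPlusZ, add_sub_cancel_right]
  module

theorem Vop_eq_sum_chiralTerm :
    Vop N = ∑ k ∈ Finset.range (N / 2), chiralTerm N (2 * k : ℕ) := by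
  refine Finset.sum_congr rfl fun k _ => ?_
  rw [chiralTerm, show ((2 * k + 1 : ℕ) : Fin N) = (2 * k : ℕ) + 1 by push_cast; ring,
    show ((2 * k + 2 : ℕ) : Fin N) = (2 * k : ℕ) + 2 by push_cast; ring]

theorem Vop_lie_Hxx (hN : 3 ≤ N) :
    ⁅Vop N, Hxx N⁆ = (2 * I) • (yzyPlusZ N 0 - yzyPlusZ N (2 * (N / 2) : ℕ)) := by
  have step (k : ℕ) : ⁅chiralTerm N (2 * k : ℕ), Hxx N⁆
      = (2 * I) • (yzyPlusZ N (2 * k : ℕ) - yzyPlusZ N (2 * (k + 1) : ℕ)) := by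
    rw [chiralTerm_lie_Hxx hN,
      show ((2 * (k + 1) : ℕ) : Fin N) = (2 * k : ℕ) + 2 by push_cast; ring]
  rw [Vop_eq_sum_chiralTerm, sum_lie, Finset.sum_congr rfl fun k _ => step k, ← Finset.smul_sum,
    Finset.sum_range_sub', Nat.mul_zero, Nat.cast_zero]

theorem Vop_two : Vop 2 = 0 := by
  simpa [Vop, sub_eq_zero] using (site_commute pX pY (by decide : (0 : Fin 2) ≠ 1)).eq

end Chain

/-- the chiral operator `V` commutes with the periodic XX Hamiltonian,
`[V, H] = 0`, for any even number of qubits `N`. -/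
theorem stmt3 (N : ℕ) [NeZero N] (hEven : Even N) :
    Vop N * Hxx N - Hxx N * Vop N = 0 := by
  rw [← Ring.lie_def]
  obtain rfl | hN : N = 2 ∨ 3 ≤ N := by
    obtain ⟨m, rfl⟩ := hEven
    have := NeZero.ne (m + m)
    omega
  · rw [Vop_two, zero_lie]
  · rw [Vop_lie_Hxx hN, Nat.two_mul_div_two_of_even hEven, Fin.natCast_self, sub_self, smul_zero]
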